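/- arXiv:2605.16389 — 2 statements merged into one kernel-verified Lean document; each statement's English description precedes it below -/
import Mathlib

section
/- Let T > 0, K₀ ∈ ℝ, K₁ > 0, B₁ > 0, 0 < α < 1, and let N be a natural number. Define c_k = (−1)^k C(α,k) and S(ω) = ∑_{k=0}^{N} c_k e^{−ikωT}. Then the effective stiffness of the discrete-time FO-SLS model at zero frequency satisfies K₀ + Re[ B₁ K₁ S(0) / (K₁ T^α + B₁ S(0)) ] = K₀ + B₁ K₁ Δ_s / (B₁ Δ_s + K₁ T^α), where Δ_s = C(N−α, N). -/
open Real Complex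

/-- Generalized binomial coefficient `C(α, k) = α(α−1)⋯(α−k+1)/k!` for real `α`. -/
noncomputable def genBinom (α : ℝ) (k : ℕ) : ℝ :=
  (∏ i ∈ Finset.range k, (α - i)) / (Nat.factorial k)

/-- Grünwald–Letnikov coefficient `c_k = (−1)^k C(α,k)`. -/
noncomputable def glCoef (α : ℝ) (k : ℕ) : ℝ := (-1) ^ k * genBinom α k

/-- Short-memory Grünwald–Letnikov sum `S(ω) = ∑_{k=0}^{N} c_k e^{−ikωT}`. -/
noncomputable def glSum (α T : ℝ) (N : ℕ) (ω : ℝ) : ℂ :=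
  ∑ k ∈ Finset.range (N + 1),
    (glCoef α k : ℂ) * Complex.exp (-(k : ℂ) * (ω * T) * Complex.I)

lemma genBinom_pascal (x : ℝ) (n : ℕ) :
    genBinom x n + genBinom x (n + 1) = genBinom (x + 1) (n + 1) := by
  have h1 : ∏ i ∈ Finset.range (n + 1), (x + 1 - i)
      = (x + 1) * ∏ i ∈ Finset.range n, (x - i) := by
    rw [Finset.prod_range_succ']
    push_cast
    ring_nf
  have h2 : ∏ i ∈ Finset.range (n + 1), (x - i)
      = (∏ i ∈ Finset.range n, (x - i)) * (x - n) := Finset.prod_range_succ _ _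
  have hf : (Nat.factorial n : ℝ) ≠ 0 := by positivity
  have hf1 : (Nat.factorial (n + 1) : ℝ) ≠ 0 := by positivity
  have hfs : (Nat.factorial (n + 1) : ℝ) = (n + 1) * Nat.factorial n := by
    rw [Nat.factorial_succ]; push_cast; ring
  unfold genBinom
  rw [h1, h2, hfs]
  field_simp
  ring

lemma glCoef_eq (α : ℝ) (n : ℕ) :
    glCoef α (n + 1) = genBinom ((n : ℝ) - α) (n + 1) := by
  unfold glCoef genBinom
  have : ∏ i ∈ Finset.range (n + 1), ((n : ℝ) - α - i)
      = ∏ i ∈ Finset.range (n + 1), (-(α - ((n : ℝ) - i))) := by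
    apply Finset.prod_congr rfl; intro i _; ring
  have hneg : ∏ i ∈ Finset.range (n + 1), (-(α - ((n : ℝ) - i)))
      = (-1) ^ (n + 1) * ∏ i ∈ Finset.range (n + 1), (α - ((n : ℝ) - i)) := by
    have hfun : (fun i : ℕ => -(α - ((n : ℝ) - i))) = fun i : ℕ => (-1) * (α - ((n : ℝ) - i)) := by
      funext i; ring
    rw [hfun, Finset.prod_mul_distrib, Finset.prod_const, Finset.card_range]
  rw [this, hneg]
  have hre : ∏ i ∈ Finset.range (n + 1), (α - ((n : ℝ) - i))
      = ∏ i ∈ Finset.range (n + 1), (α - i) := by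
    rw [← Finset.prod_range_reflect]
    apply Finset.prod_congr rfl
    intro i hi
    simp only [Finset.mem_range] at hi
    have : (n + 1 - 1 - i : ℕ) = n - i := by omega
    rw [this]
    have : ((n - i : ℕ) : ℝ) = (n : ℝ) - i := by
      have : i ≤ n := by omega
      push_cast [this]; ring
    rw [this]
    ring
  rw [hre]
  ring

lemma glSum_zero (α : ℝ) (hα : α < 1) (N : ℕ) :
    ∑ k ∈ Finset.range (N + 1), glCoef α k = genBinom ((N : ℝ) - α) N := by
  induction N with
  | zero => simp [glCoef, genBinom]
  | succ n ih =>
    rw [Finset.sum_range_succ, ih, glCoef_eq]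
    have := genBinom_pascal ((n : ℝ) - α) n
    have h : ((n : ℝ) - α) + 1 = ((n + 1 : ℕ) : ℝ) - α := by push_cast; ring
    rw [h] at this
    exact this

lemma genBinom_pos {α : ℝ} (h0 : 0 < α) (h1 : α < 1) (N : ℕ) :
    0 < genBinom ((N : ℝ) - α) N := by
  unfold genBinom
  apply div_pos
  · apply Finset.prod_pos
    intro i hi
    simp only [Finset.mem_range] at hi
    have : (i : ℝ) ≤ (N : ℝ) - 1 := by
      have : (i : ℝ) + 1 ≤ (N : ℝ) := by exact_mod_cast hi
      linarith
    linarith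
  · positivity

/-- For `T > 0`, `K₁ > 0`, `B₁ > 0`, `0 < α < 1`, and any memory length `N`,
the effective stiffness of the discrete-time FO-SLS model at zero frequency
satisfies `K₀ + Re[B₁K₁S(0)/(K₁T^α + B₁S(0))] = K₀ + B₁K₁Δ_s/(B₁Δ_s + K₁T^α)`,
where `Δ_s = C(N − α, N)`. -/
theorem effective_stiffness_at_zero_freq
    (T K₀ K₁ B₁ α : ℝ) (hT : 0 < T) (hK₁ : 0 < K₁) (hB₁ : 0 < B₁)
    (h0 : 0 < α) (h1 : α < 1) (N : ℕ) :
    K₀ + ((B₁ : ℂ) * (K₁ : ℂ) * glSum α T N 0 /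
            ((K₁ : ℂ) * ((T ^ α : ℝ) : ℂ) + (B₁ : ℂ) * glSum α T N 0)).re
      = K₀ + B₁ * K₁ * genBinom ((N : ℝ) - α) N /
          (B₁ * genBinom ((N : ℝ) - α) N + K₁ * T ^ α) := by
  set Δ := genBinom ((N : ℝ) - α) N with hΔ
  have hsum : glSum α T N 0 = ((Δ : ℝ) : ℂ) := by
    unfold glSum
    have : ∀ k ∈ Finset.range (N + 1),
        (glCoef α k : ℂ) * Complex.exp (-(k : ℂ) * ((0 : ℝ) * T) * Complex.I)
        = ((glCoef α k : ℝ) : ℂ) := by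
      intro k _
      norm_num
    rw [Finset.sum_congr rfl this, ← Complex.ofReal_sum, glSum_zero α h1 N]
  rw [hsum]
  have key : (B₁ : ℂ) * (K₁ : ℂ) * ((Δ : ℝ) : ℂ) /
      ((K₁ : ℂ) * ((T ^ α : ℝ) : ℂ) + (B₁ : ℂ) * ((Δ : ℝ) : ℂ))
      = (((B₁ * K₁ * Δ / (K₁ * T ^ α + B₁ * Δ)) : ℝ) : ℂ) := by
    push_cast
    ring
  rw [key, Complex.ofReal_re]
  have hΔpos : 0 < Δ := genBinom_pos h0 h1 N
  have : K₁ * T ^ α + B₁ * Δ = B₁ * Δ + K₁ * T ^ α := by ring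
  rw [this]
end

section
/- Let T > 0, K₁ > 0, B₁ > 0, 0 < α < 1, and let N ≥ 1 be a natural number. Define c_k = (−1)^k C(α,k) and S(ω) = ∑_{k=0}^{N} c_k e^{−ikωT}. Then the limit as ω → 0⁺ of (1/ω) · Im[ B₁ K₁ S(ω) / (K₁ T^α + B₁ S(ω)) ] exists and equals B₁ K₁² T^{α+1} Δ_d / (B₁ Δ_s + K₁ T^α)², where Δ_d = α · C(N−α, N−1) and Δ_s = C(N−α, N). -/
open Real Complex Filter

/-! For real `a, g, b` one has `Im (a z / (g + b z)) = a g Im z / |g + b z|²`, so the damping is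
`a g (Im S(ω) / ω) / |g + b S(ω)|²`. As `ω → 0`, `S(ω) → S(0)` and, because `S(0)` is real,
`Im S(ω) / ω → Im S'(0)`. Both values are binomial sums: `S(0) = ∑ c_k = C(N - α, N)` by Pascal's
rule and upper negation, and `Im S'(0) = -T ∑ k c_k = T α C(N - α, N - 1)`, which the absorption
identity `k C(α, k) = α C(α - 1, k - 1)` reduces to the first sum with `α - 1` in place of `α`. -/

open Finset Topology

theorem genBinom_succ_succ (y : ℝ) (n : ℕ) :
    genBinom (y + 1) (n + 1) = genBinom y n + genBinom y (n + 1) := by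
  have hshift : ∏ i ∈ range (n + 1), (y + 1 - i) = (y + 1) * ∏ i ∈ range n, (y - i) := by
    rw [prod_range_succ', mul_comm]
    congr 1
    · simp
    · exact prod_congr rfl fun i _ => by push_cast; ring
  simp only [genBinom, hshift, prod_range_succ, Nat.factorial_succ, Nat.cast_mul]
  field_simp
  push_cast
  ring

theorem genBinom_natCast_sub_one_sub (y : ℝ) (m : ℕ) :
    genBinom ((m : ℝ) - 1 - y) m = glCoef y m := by
  have hreflect : ∏ i ∈ range m, ((m : ℝ) - 1 - y - i) = ∏ i ∈ range m, (-1) * (y - i) := by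
    rw [← prod_range_reflect]
    refine prod_congr rfl fun i hi => ?_
    rw [Nat.cast_sub (by simp at hi; omega), Nat.cast_sub (by simp at hi; omega)]
    push_cast
    ring
  rw [glCoef, genBinom, hreflect, prod_mul_distrib, prod_const, card_range, mul_div_assoc,
    genBinom]

theorem succ_mul_genBinom_succ (y : ℝ) (k : ℕ) :
    ((k : ℝ) + 1) * genBinom y (k + 1) = y * genBinom (y - 1) k := by
  have hshift : ∏ i ∈ range (k + 1), (y - i) = y * ∏ i ∈ range k, (y - 1 - i) := by
    rw [prod_range_succ', mul_comm]
    congr 1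
    · simp
    · exact prod_congr rfl fun i _ => by push_cast; ring
  simp only [genBinom, hshift, Nat.factorial_succ, Nat.cast_mul]
  field_simp
  push_cast
  ring

theorem succ_mul_glCoef_succ (y : ℝ) (k : ℕ) :
    ((k : ℝ) + 1) * glCoef y (k + 1) = -(y * glCoef (y - 1) k) := by
  rw [glCoef, glCoef, mul_left_comm, succ_mul_genBinom_succ, pow_succ]
  ring

theorem genBinom_pos_s19 {y : ℝ} {n : ℕ} (hy : (n : ℝ) - 1 < y) : 0 < genBinom y n := by
  refine div_pos (prod_pos fun i hi => ?_) (by positivity)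
  have : (i : ℝ) + 1 ≤ n := by exact_mod_cast mem_range.mp hi
  linarith

theorem sum_range_glCoef (α : ℝ) (N : ℕ) :
    ∑ k ∈ range (N + 1), glCoef α k = genBinom ((N : ℝ) - α) N := by
  induction N with
  | zero => simp [glCoef, genBinom]
  | succ n ih =>
    rw [sum_range_succ, ih, ← genBinom_natCast_sub_one_sub, Nat.cast_succ,
      show (n : ℝ) + 1 - α = n - α + 1 by ring, genBinom_succ_succ]
    ring_nf

theorem sum_range_mul_glCoef (α : ℝ) {N : ℕ} (hN : 1 ≤ N) :
    ∑ k ∈ range (N + 1), (k : ℝ) * glCoef α k = -(α * genBinom ((N : ℝ) - α) (N - 1)) := by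
  obtain ⟨M, rfl⟩ : ∃ M, N = M + 1 := ⟨N - 1, by omega⟩
  have hsum := sum_range_glCoef (α - 1) M
  rw [show (M : ℝ) - (α - 1) = ((M + 1 : ℕ) : ℝ) - α by push_cast; ring] at hsum
  rw [sum_range_succ']
  simp only [Nat.cast_succ, succ_mul_glCoef_succ, sum_neg_distrib, ← mul_sum, hsum,
    Nat.add_sub_cancel]
  simp

theorem glSum_zero_s19 (α T : ℝ) (N : ℕ) : glSum α T N 0 = genBinom ((N : ℝ) - α) N := by
  simp [glSum, ← sum_range_glCoef]

theorem hasDerivAt_glSum_zero (α T : ℝ) {N : ℕ} (hN : 1 ≤ N) :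
    HasDerivAt (glSum α T N) ((T * (α * genBinom ((N : ℝ) - α) (N - 1)) : ℝ) * I) 0 := by
  have hterm (k : ℕ) : HasDerivAt (fun ω : ℝ => (glCoef α k : ℂ) * exp (-(k : ℂ) * (ω * T) * I))
      (glCoef α k * (-(k : ℂ) * T * I)) 0 := by
    have hlin : HasDerivAt (fun ω : ℝ => -(k : ℂ) * (ω * T) * I) (-(k : ℂ) * (1 * T) * I) 0 :=
      (((hasDerivAt_id (0 : ℝ)).ofReal_comp.mul_const (T : ℂ)).const_mul _).mul_const I
    simpa using hlin.cexp.const_mul (glCoef α k : ℂ)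
  refine (HasDerivAt.fun_sum (u := range (N + 1)) fun k _ => hterm k).congr_deriv ?_
  rw [← neg_neg (α * _), ← sum_range_mul_glCoef α hN]
  push_cast
  rw [← sum_neg_distrib, mul_sum, sum_mul]
  exact sum_congr rfl fun k _ => by ring

theorem im_ofReal_mul_div_ofReal_add_ofReal_mul (a g b : ℝ) (z : ℂ) :
    ((a : ℂ) * z / ((g : ℂ) + b * z)).im = a * g * z.im / normSq ((g : ℂ) + b * z) := by
  rw [div_im]
  simp only [add_re, add_im, mul_re, mul_im, ofReal_re, ofReal_im]
  ring

theorem tendsto_im_div_self_of_hasDerivAt {f : ℝ → ℂ} {f' : ℂ} {s : ℝ}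
    (hf : HasDerivAt f f' 0) (hf0 : f 0 = s) :
    Tendsto (fun ω => (f ω).im / ω) (𝓝[≠] 0) (𝓝 f'.im) :=
  ((continuous_im.tendsto f').comp hf.tendsto_slope_zero).congr fun ω => by
    simp only [Function.comp_apply, zero_add, hf0, smul_im, sub_im, ofReal_im, sub_zero,
      smul_eq_mul, div_eq_inv_mul]

theorem tendsto_inv_mul_im_div_of_hasDerivAt {f : ℝ → ℂ} {f' : ℂ} {s : ℝ}
    (hf : HasDerivAt f f' 0) (hf0 : f 0 = s) (a : ℝ) {g b : ℝ} (hden : g + b * s ≠ 0) :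
    Tendsto (fun ω => (1 / ω) * ((a : ℂ) * f ω / ((g : ℂ) + b * f ω)).im) (𝓝[≠] 0)
      (𝓝 (a * g * f'.im / (g + b * s) ^ 2)) := by
  have hnormSq : Tendsto (fun ω => normSq ((g : ℂ) + b * f ω)) (𝓝[≠] 0) (𝓝 ((g + b * s) ^ 2)) := by
    have hcont : ContinuousAt (fun ω => normSq ((g : ℂ) + b * f ω)) 0 :=
      continuous_normSq.continuousAt.comp (continuousAt_const.add
        (continuousAt_const.mul hf.continuousAt))
    convert hcont.tendsto.mono_left nhdsWithin_le_nhds using 2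
    rw [hf0, ← ofReal_mul, ← ofReal_add, normSq_ofReal, sq]
  refine (((tendsto_im_div_self_of_hasDerivAt hf hf0).const_mul (a * g)).div hnormSq
    (pow_ne_zero 2 hden)).congr fun ω => ?_
  rw [Pi.div_apply, im_ofReal_mul_div_ofReal_add_ofReal_mul]
  ring

theorem effective_damping_low_freq_limit_general
    (T K₁ B₁ α : ℝ) (hT : 0 < T) (hK₁ : 0 < K₁) (hB₁ : 0 < B₁)
    (h1 : α < 1) (N : ℕ) (hN : 1 ≤ N) :
    Filter.Tendsto
      (fun ω : ℝ =>
        (1 / ω) * ((B₁ : ℂ) * (K₁ : ℂ) * glSum α T N ω /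
            ((K₁ : ℂ) * ((T ^ α : ℝ) : ℂ) + (B₁ : ℂ) * glSum α T N ω)).im)
      (nhdsWithin 0 (Set.Ioi 0))
      (nhds (B₁ * K₁ ^ 2 * T ^ (α + 1) * (α * genBinom ((N : ℝ) - α) (N - 1)) /
        (B₁ * genBinom ((N : ℝ) - α) N + K₁ * T ^ α) ^ 2)) := by
  have hΔs : 0 < genBinom ((N : ℝ) - α) N := genBinom_pos_s19 (by linarith)
  have hden : K₁ * T ^ α + B₁ * genBinom ((N : ℝ) - α) N ≠ 0 := by positivity
  have hlim := (tendsto_inv_mul_im_div_of_hasDerivAt (hasDerivAt_glSum_zero α T hN)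
    (glSum_zero_s19 α T N) (B₁ * K₁) hden).mono_left (nhdsGT_le_nhdsNE 0)
  rw [mul_I_im, ofReal_re] at hlim
  push_cast at hlim
  convert hlim using 2
  rw [rpow_add hT, rpow_one]
  ring

/-- For `T > 0`, `K₁ > 0`, `B₁ > 0`, `0 < α < 1`, and memory length `N ≥ 1`,
the effective damping `(1/ω)·Im[B₁K₁S(ω)/(K₁T^α + B₁S(ω))]` of the
discrete-time FO-SLS model tends, as `ω → 0⁺`, to
`B₁K₁²T^{α+1}Δ_d/(B₁Δ_s + K₁T^α)²`, where `Δ_d = α·C(N − α, N − 1)` and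
`Δ_s = C(N − α, N)`. -/
theorem effective_damping_low_freq_limit
    (T K₁ B₁ α : ℝ) (hT : 0 < T) (hK₁ : 0 < K₁) (hB₁ : 0 < B₁)
    (h0 : 0 < α) (h1 : α < 1) (N : ℕ) (hN : 1 ≤ N) :
    Filter.Tendsto
      (fun ω : ℝ =>
        (1 / ω) * ((B₁ : ℂ) * (K₁ : ℂ) * glSum α T N ω /
            ((K₁ : ℂ) * ((T ^ α : ℝ) : ℂ) + (B₁ : ℂ) * glSum α T N ω)).im)
      (nhdsWithin 0 (Set.Ioi 0))
      (nhds (B₁ * K₁ ^ 2 * T ^ (α + 1) * (α * genBinom ((N : ℝ) - α) (N - 1)) /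
        (B₁ * genBinom ((N : ℝ) - α) N + K₁ * T ^ α) ^ 2)) :=
  effective_damping_low_freq_limit_general T K₁ B₁ α hT hK₁ hB₁ h1 N hN
end
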